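/- Fix integers b, d, p ≥ 1. If a tuple (j_1, …, j_b) of pairwise distinct nonzero vectors of ℤ^d satisfies the genericity conditions (i)–(iv), then for every positive integer K the scaled tuple (K j_1, …, K j_b) also consists of pairwise distinct nonzero vectors and satisfies the genericity conditions (i)–(iv). -/
import Mathlib


open scoped BigOperators Classical
open MeasureTheory

namespace NLSQP


/-- Pairs `(Δn, Δj) ∈ ℤ^b × R^d`. -/
abbrev PairR (b d : ℕ) (R : Type) := (Fin b → ℤ) × (Fin d → R)

/-- the standard basis vector `e_k` of `ℤ^b`. -/
def eB (b : ℕ) (k : Fin b) : Fin b → ℤ := Pi.single k 1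

variable {R : Type} [CommRing R]

/-- `ω⁰ = (|j_1|², …, |j_b|²)`. -/
def omega0 {b d : ℕ} (j : Fin b → Fin d → R) : Fin b → R :=
  fun k => ∑ i, j k i * j k i

/-- dot product of an integer vector with a vector of `R^b`. -/
def dotN {b : ℕ} (n : Fin b → ℤ) (w : Fin b → R) : R := ∑ k, (n k : R) * w k

/-- dot product on `R^d`. -/
def dotJ {d : ℕ} (x y : Fin d → R) : R := ∑ i, x i * y i

/-- `Γ⁺⁺`. -/
def GammaPP (b d p : ℕ) (j : Fin b → Fin d → R) : Set (PairR b d R) :=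
  {x | ∃ P : Fin b → Fin b → ℕ, (∑ k, ∑ k', P k k') ≤ p ∧
    x.1 = -∑ k, ∑ k', (P k k' : ℤ) • (eB b k - eB b k') ∧
    x.2 = ∑ k, ∑ k', (P k k' : ℤ) • (j k - j k')}

/-- `Γ⁺⁻`. -/
def GammaPM (b d p : ℕ) (j : Fin b → Fin d → R) : Set (PairR b d R) :=
  {x | ∃ P : Fin b → Fin b → ℕ, ∃ κ κ' : Fin b, (∑ k, ∑ k', P k k') + 1 ≤ p ∧
    x.1 = (-∑ k, ∑ k', (P k k' : ℤ) • (eB b k - eB b k')) - (eB b κ + eB b κ') ∧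
    x.2 = (∑ k, ∑ k', (P k k' : ℤ) • (j k - j k')) + (j κ + j κ')}

/-- `Γ⁻⁺`. -/
def GammaMP (b d p : ℕ) (j : Fin b → Fin d → R) : Set (PairR b d R) :=
  {x | ∃ P : Fin b → Fin b → ℕ, ∃ κ κ' : Fin b, (∑ k, ∑ k', P k k') + 1 ≤ p ∧
    x.1 = (-∑ k, ∑ k', (P k k' : ℤ) • (eB b k - eB b k')) + (eB b κ + eB b κ') ∧
    x.2 = (∑ k, ∑ k', (P k k' : ℤ) • (j k - j k')) - (j κ + j κ')}

/-- the three `Γ`'s, indexed by `Fin 3` (`0 ↦ Γ⁺⁺`, `1 ↦ Γ⁺⁻`, `2 ↦ Γ⁻⁺`). -/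
def GammaOf (b d p : ℕ) (j : Fin b → Fin d → R) (t : Fin 3) : Set (PairR b d R) :=
  if t = 0 then GammaPP b d p j else if t = 1 then GammaPM b d p j else GammaMP b d p j

/-- an admissible representation of `x` as a sum of `d+2` elements of `Γ⁺⁺ ∪ Γ⁺⁻ ∪ Γ⁻⁺`
in which the numbers of summands from `Γ⁺⁻` and from `Γ⁻⁺` differ by at most `1`. -/
def IsRep (b d p : ℕ) (j : Fin b → Fin d → R) (x : PairR b d R)
    (t : Fin (d+2) → Fin 3) (g : Fin (d+2) → PairR b d R) : Prop :=
  (∀ i, g i ∈ GammaOf b d p j (t i)) ∧ x = ∑ i, g i ∧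
  (((Finset.univ.filter fun i => t i = 1).card : ℤ)
      - ((Finset.univ.filter fun i => t i = 2).card : ℤ)).natAbs ≤ 1

/-- the set `𝒜`. -/
def calA (b d p : ℕ) (j : Fin b → Fin d → R) : Set (PairR b d R) :=
  {x | ∃ t g, IsRep b d p j x t g}

/-- `x` is a sum of `m` elements of `Γ⁺⁺`. -/
def SumOfPP (b d p : ℕ) (m : ℕ) (j : Fin b → Fin d → R) (x : PairR b d R) : Prop :=
  ∃ g : Fin m → PairR b d R, (∀ i, g i ∈ GammaPP b d p j) ∧ x = ∑ i, g i

/-- `J = |Δj|² + Δn·ω⁰`. -/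
def Jplus {b d : ℕ} (j : Fin b → Fin d → R) (x : PairR b d R) : R :=
  dotJ x.2 x.2 + dotN x.1 (omega0 j)

/-- `J = |Δj|² + 2a'·Δj − Δn·ω⁰`. -/
def Jshift {b d : ℕ} (j : Fin b → Fin d → R) (a' : Fin d → R) (x : PairR b d R) : R :=
  dotJ x.2 x.2 + 2 * dotJ a' x.2 - dotN x.1 (omega0 j)

def diffSet {b d : ℕ} (j : Fin b → Fin d → R) : Set (Fin d → R) :=
  {v | ∃ k k', k ≠ k' ∧ v = j k - j k'}

def sumSet {b d : ℕ} (j : Fin b → Fin d → R) : Set (Fin d → R) :=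
  {v | ∃ k k' : Fin b, v = j k + j k'}

def negSumSet {b d : ℕ} (j : Fin b → Fin d → R) : Set (Fin d → R) :=
  {v | ∃ k k' : Fin b, v = -(j k + j k')}

/-- genericity condition (i). -/
def CondI (b d p : ℕ) (j : Fin b → Fin d → R) : Prop :=
  ∀ x ∈ calA b d p j, x ≠ 0 →
    dotJ x.2 x.2 + dotN x.1 (omega0 j) ≠ 0 ∧
    dotJ x.2 x.2 - dotN x.1 (omega0 j) ≠ 0

/-- genericity condition (ii). -/
def CondII (b d p : ℕ) (j : Fin b → Fin d → R) : Prop :=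
  ∀ σ : Fin (d+1) → PairR b d R, Function.Injective σ →
    (∀ i, σ i ∈ calA b d p j ∧ σ i ≠ 0 ∧ SumOfPP b d p (d+1) j (σ i) ∧ (σ i).2 ≠ 0) →
    (∃ i, (σ i).2 ∉ diffSet j) →
    Matrix.det (Matrix.of fun i l : Fin (d+1) =>
      if h : (l : ℕ) < d then 2 * (σ i).2 ⟨l, h⟩ else Jplus j (σ i)) ≠ 0

/-- `x` is a sum of `d` elements of `Γ⁺⁺` and one element of the `Γ` of type `tt`. -/
def BbbA (b d p : ℕ) (tt : Fin 3) (j : Fin b → Fin d → R) (x : PairR b d R) : Prop :=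
  ∃ g : Fin d → PairR b d R, ∃ y, (∀ i, g i ∈ GammaPP b d p j) ∧
    y ∈ GammaOf b d p j tt ∧ x = (∑ i, g i) + y

/-- one half of genericity condition (iii) (the other half exchanges `Γ⁺⁻` and `Γ⁻⁺`). -/
def CondIIIhalf (b d p : ℕ) (tt : Fin 3) (j : Fin b → Fin d → R)
    (avoid : Set (Fin d → R)) : Prop :=
  ∀ σ : Fin (d+2) → PairR b d R, Function.Injective σ →
    (∀ i, σ i ∈ calA b d p j ∧ σ i ≠ 0 ∧ (σ i).2 ≠ 0) →
    (¬ ∃ τ : Fin (d+1) → Fin (d+2), Function.Injective τ ∧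
        ∀ i, SumOfPP b d p (d+1) j (σ (τ i))) →
    ∀ i₀ : Fin (d+2), BbbA b d p tt j (σ i₀) →
    ((σ i₀).2 ∉ avoid ∨ ∃ i, (σ i).2 ∉ diffSet j) →
    ∀ t : Fin (d+1) → Fin (d+2) → Fin 3, ∀ g : Fin (d+1) → Fin (d+2) → PairR b d R,
      (∀ i, IsRep b d p j (σ (i₀.succAbove i)) (t i) (g i)) →
      Matrix.det (Matrix.of fun i l : Fin (d+1) =>
        if h : (l : ℕ) < d then 2 * (σ (i₀.succAbove i)).2 ⟨l, h⟩
        else if (Finset.univ.filter fun r => t i r = tt).card % 2 = 1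
          then Jshift j ((σ i₀).2) (σ (i₀.succAbove i))
          else Jplus j (σ (i₀.succAbove i))) ≠ 0

/-- genericity condition (iii). -/
def CondIII (b d p : ℕ) (j : Fin b → Fin d → R) : Prop :=
  CondIIIhalf b d p 1 j (sumSet j) ∧ CondIIIhalf b d p 2 j (negSumSet j)

/-- genericity condition (iv). -/
def CondIV (b d p : ℕ) (j : Fin b → Fin d → R) : Prop :=
  ∀ m : Fin b, ∀ x ∈ GammaPP b d p j,
    (∀ k' : Fin b, x ≠ (-(eB b k') + eB b m, j k' - j m)) →
    dotN x.1 (omega0 j) + 2 * dotJ (j m) x.2 + dotJ x.2 x.2 ≠ 0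

/-- the genericity conditions (i)–(iv). -/
def Generic (b d p : ℕ) (j : Fin b → Fin d → R) : Prop :=
  CondI b d p j ∧ CondII b d p j ∧ CondIII b d p j ∧ CondIV b d p j


section ScalingLemmas

variable (c : ℤ)

/-- scaling a vector of `ℤ^d` by `c`. -/
def sclV {d : ℕ} (v : Fin d → ℤ) : Fin d → ℤ := fun i => c * v i

/-- scaling the second component of a pair by `c`. -/
def sclP {b d : ℕ} (x : PairR b d ℤ) : PairR b d ℤ := (x.1, sclV c x.2)

variable {b d p : ℕ} {j : Fin b → Fin d → ℤ}

@[simp] lemma sclP_fst (x : PairR b d ℤ) : (sclP c x).1 = x.1 := rfl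
@[simp] lemma sclP_snd (x : PairR b d ℤ) : (sclP c x).2 = sclV c x.2 := rfl

lemma sclV_injective (hc : c ≠ 0) : Function.Injective (sclV c (d := d)) := by
  intro v w h
  funext i
  exact mul_left_cancel₀ hc (congrFun h i)

lemma sclP_injective (hc : c ≠ 0) : Function.Injective (sclP c (b := b) (d := d)) := by
  intro x y h
  obtain ⟨h1, h2⟩ := Prod.ext_iff.mp h
  exact Prod.ext h1 (sclV_injective c hc h2)

lemma sclV_zero : sclV c (0 : Fin d → ℤ) = 0 := by
  funext i; simp [sclV]

lemma sclP_zero : sclP c (0 : PairR b d ℤ) = 0 := by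
  refine Prod.ext rfl ?_
  exact sclV_zero c

lemma sclV_add (v w : Fin d → ℤ) : sclV c (v + w) = sclV c v + sclV c w := by
  funext i; simp [sclV, mul_add]

lemma sclV_sub (v w : Fin d → ℤ) : sclV c (v - w) = sclV c v - sclV c w := by
  funext i; simp [sclV, mul_sub]

lemma sclV_neg (v : Fin d → ℤ) : sclV c (-v) = -(sclV c v) := by
  funext i; simp [sclV]

lemma sclP_sum {m : ℕ} (g : Fin m → PairR b d ℤ) :
    sclP c (∑ i, g i) = ∑ i, sclP c (g i) := by
  refine Prod.ext ?_ ?_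
  · simp [sclP, Prod.fst_sum]
  · funext l
    simp [sclP, sclV, Prod.snd_sum, Finset.sum_apply, Finset.mul_sum]

lemma sum_sub_scale (P : Fin b → Fin b → ℕ) :
    (∑ k, ∑ k', (P k k' : ℤ) • ((fun i => c * j k i) - fun i => c * j k' i))
      = sclV c (∑ k, ∑ k', (P k k' : ℤ) • (j k - j k')) := by
  funext i
  simp only [sclV, Finset.sum_apply, Pi.smul_apply, Pi.sub_apply, smul_eq_mul]
  rw [Finset.mul_sum]
  refine Finset.sum_congr rfl fun k _ => ?_
  rw [Finset.mul_sum]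
  refine Finset.sum_congr rfl fun k' _ => ?_
  ring

lemma gammaPP_scale :
    GammaPP b d p (fun k i => c * j k i) = sclP c '' GammaPP b d p j := by
  ext x
  constructor
  · rintro ⟨P, hP, h1, h2⟩
    refine ⟨(x.1, ∑ k, ∑ k', (P k k' : ℤ) • (j k - j k')), ⟨P, hP, h1, rfl⟩, ?_⟩
    refine Prod.ext rfl ?_
    rw [sclP_snd]
    rw [h2, sum_sub_scale]
  · rintro ⟨y, ⟨P, hP, h1, h2⟩, rfl⟩
    exact ⟨P, hP, h1, by rw [sclP_snd, h2, sum_sub_scale]⟩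

lemma gammaPM_scale :
    GammaPM b d p (fun k i => c * j k i) = sclP c '' GammaPM b d p j := by
  ext x
  constructor
  · rintro ⟨P, κ, κ', hP, h1, h2⟩
    refine ⟨(x.1, (∑ k, ∑ k', (P k k' : ℤ) • (j k - j k')) + (j κ + j κ')),
      ⟨P, κ, κ', hP, h1, rfl⟩, ?_⟩
    refine Prod.ext rfl ?_
    rw [sclP_snd, sclV_add, sclV_add, ← sum_sub_scale, h2]
    rfl
  · rintro ⟨y, ⟨P, κ, κ', hP, h1, h2⟩, rfl⟩
    refine ⟨P, κ, κ', hP, h1, ?_⟩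
    rw [sclP_snd, h2, sclV_add, sclV_add, ← sum_sub_scale]
    rfl

lemma gammaMP_scale :
    GammaMP b d p (fun k i => c * j k i) = sclP c '' GammaMP b d p j := by
  ext x
  constructor
  · rintro ⟨P, κ, κ', hP, h1, h2⟩
    refine ⟨(x.1, (∑ k, ∑ k', (P k k' : ℤ) • (j k - j k')) - (j κ + j κ')),
      ⟨P, κ, κ', hP, h1, rfl⟩, ?_⟩
    refine Prod.ext rfl ?_
    rw [sclP_snd, sclV_sub, sclV_add, ← sum_sub_scale, h2]
    rfl
  · rintro ⟨y, ⟨P, κ, κ', hP, h1, h2⟩, rfl⟩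
    refine ⟨P, κ, κ', hP, h1, ?_⟩
    rw [sclP_snd, h2, sclV_sub, sclV_add, ← sum_sub_scale]
    rfl

lemma gammaOf_scale (t : Fin 3) :
    GammaOf b d p (fun k i => c * j k i) t = sclP c '' GammaOf b d p j t := by
  unfold GammaOf
  split_ifs
  · exact gammaPP_scale c
  · exact gammaPM_scale c
  · exact gammaMP_scale c

lemma isRep_scale_back {x : PairR b d ℤ} {t : Fin (d+2) → Fin 3}
    {g : Fin (d+2) → PairR b d ℤ}
    (h : IsRep b d p (fun k i => c * j k i) x t g) :
    ∃ y g', x = sclP c y ∧ IsRep b d p j y t g' := by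
  obtain ⟨hg, hx, hcard⟩ := h
  have hg2 : ∀ i, ∃ y, y ∈ GammaOf b d p j (t i) ∧ sclP c y = g i := by
    intro i
    have := hg i
    rw [gammaOf_scale] at this
    obtain ⟨y, hy, hyy⟩ := this
    exact ⟨y, hy, hyy⟩
  choose g' hg' hgg' using hg2
  refine ⟨∑ i, g' i, g', ?_, hg', rfl, hcard⟩
  rw [hx, sclP_sum]
  exact Finset.sum_congr rfl fun i _ => (hgg' i).symm

lemma isRep_scale_fwd {y : PairR b d ℤ} {t : Fin (d+2) → Fin 3}
    {g' : Fin (d+2) → PairR b d ℤ}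
    (h : IsRep b d p j y t g') :
    IsRep b d p (fun k i => c * j k i) (sclP c y) t (fun i => sclP c (g' i)) := by
  obtain ⟨hg, hy, hcard⟩ := h
  refine ⟨fun i => ?_, ?_, hcard⟩
  · rw [gammaOf_scale]
    exact ⟨g' i, hg i, rfl⟩
  · rw [hy, sclP_sum]

lemma calA_scale :
    calA b d p (fun k i => c * j k i) = sclP c '' calA b d p j := by
  ext x
  constructor
  · rintro ⟨t, g, h⟩
    obtain ⟨y, g', rfl, hrep⟩ := isRep_scale_back c h
    exact ⟨y, ⟨t, g', hrep⟩, rfl⟩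
  · rintro ⟨y, ⟨t, g', hrep⟩, rfl⟩
    exact ⟨t, fun i => sclP c (g' i), isRep_scale_fwd c hrep⟩

lemma sumOfPP_scale_iff (hc : c ≠ 0) {m : ℕ} {y : PairR b d ℤ} :
    SumOfPP b d p m (fun k i => c * j k i) (sclP c y) ↔ SumOfPP b d p m j y := by
  constructor
  · rintro ⟨g, hg, heq⟩
    have hg2 : ∀ i, ∃ z, z ∈ GammaPP b d p j ∧ sclP c z = g i := by
      intro i
      have := hg i
      rw [gammaPP_scale] at this
      obtain ⟨z, hz, hzz⟩ := this
      exact ⟨z, hz, hzz⟩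
    choose g' hg' hgg' using hg2
    refine ⟨g', hg', sclP_injective c hc ?_⟩
    rw [heq, sclP_sum]
    exact (Finset.sum_congr rfl fun i _ => hgg' i).symm
  · rintro ⟨g, hg, rfl⟩
    refine ⟨fun i => sclP c (g i), fun i => ?_, by rw [sclP_sum]⟩
    rw [gammaPP_scale]
    exact ⟨g i, hg i, rfl⟩

lemma mem_diffSet_scale (hc : c ≠ 0) {v : Fin d → ℤ} :
    sclV c v ∈ diffSet (fun k i => c * j k i) ↔ v ∈ diffSet j := by
  constructor
  · rintro ⟨k, k', hkk, h⟩
    refine ⟨k, k', hkk, sclV_injective c hc ?_⟩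
    rw [h, sclV_sub]
    rfl
  · rintro ⟨k, k', hkk, rfl⟩
    refine ⟨k, k', hkk, ?_⟩
    rw [sclV_sub]
    rfl

lemma mem_sumSet_scale (hc : c ≠ 0) {v : Fin d → ℤ} :
    sclV c v ∈ sumSet (fun k i => c * j k i) ↔ v ∈ sumSet j := by
  constructor
  · rintro ⟨k, k', h⟩
    refine ⟨k, k', sclV_injective c hc ?_⟩
    rw [h, sclV_add]
    rfl
  · rintro ⟨k, k', rfl⟩
    refine ⟨k, k', ?_⟩
    rw [sclV_add]
    rfl

lemma mem_negSumSet_scale (hc : c ≠ 0) {v : Fin d → ℤ} :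
    sclV c v ∈ negSumSet (fun k i => c * j k i) ↔ v ∈ negSumSet j := by
  constructor
  · rintro ⟨k, k', h⟩
    refine ⟨k, k', sclV_injective c hc ?_⟩
    rw [h, sclV_neg, sclV_add]
    rfl
  · rintro ⟨k, k', rfl⟩
    refine ⟨k, k', ?_⟩
    rw [sclV_neg, sclV_add]
    rfl

lemma dotJ_scale (v w : Fin d → ℤ) :
    dotJ (sclV c v) (sclV c w) = c ^ 2 * dotJ v w := by
  simp only [dotJ, sclV]
  rw [Finset.mul_sum]
  exact Finset.sum_congr rfl fun i _ => by ring

lemma omega0_scale :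
    omega0 (fun k i => c * j k i) = fun k => c ^ 2 * omega0 j k := by
  funext k
  simp only [omega0]
  rw [Finset.mul_sum]
  exact Finset.sum_congr rfl fun i _ => by ring

lemma dotN_scale (n : Fin b → ℤ) :
    dotN n (omega0 (fun k i => c * j k i)) = c ^ 2 * dotN n (omega0 j) := by
  rw [omega0_scale]
  simp only [dotN]
  rw [Finset.mul_sum]
  exact Finset.sum_congr rfl fun k _ => by ring

lemma jplus_scale (x : PairR b d ℤ) :
    Jplus (fun k i => c * j k i) (sclP c x) = c ^ 2 * Jplus j x := by
  simp only [Jplus, sclP_fst, sclP_snd, dotJ_scale, dotN_scale]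
  ring

lemma jshift_scale (a' : Fin d → ℤ) (x : PairR b d ℤ) :
    Jshift (fun k i => c * j k i) (sclV c a') (sclP c x) = c ^ 2 * Jshift j a' x := by
  simp only [Jshift, sclP_fst, sclP_snd, dotJ_scale, dotN_scale]
  ring

lemma bbbA_scale_iff (hc : c ≠ 0) (tt : Fin 3) {y : PairR b d ℤ} :
    BbbA b d p tt (fun k i => c * j k i) (sclP c y) ↔ BbbA b d p tt j y := by
  constructor
  · rintro ⟨g, z, hg, hz, heq⟩
    have hg2 : ∀ i, ∃ w, w ∈ GammaPP b d p j ∧ sclP c w = g i := by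
      intro i
      have := hg i
      rw [gammaPP_scale] at this
      obtain ⟨w, hw, hww⟩ := this
      exact ⟨w, hw, hww⟩
    choose g' hg' hgg' using hg2
    rw [gammaOf_scale] at hz
    obtain ⟨z', hz', hzz'⟩ := hz
    refine ⟨g', z', hg', hz', sclP_injective c hc ?_⟩
    rw [heq]
    have : sclP c ((∑ i, g' i) + z') = (∑ i, sclP c (g' i)) + sclP c z' := by
      refine Prod.ext ?_ ?_
      · simp [sclP, Prod.fst_sum]
      · funext l
        simp [sclP, sclV, Prod.snd_sum, Finset.sum_apply, Finset.mul_sum, mul_add]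
    rw [this]
    congr 1
    · exact (Finset.sum_congr rfl fun i _ => hgg' i).symm
    · exact hzz'.symm
  · rintro ⟨g, z, hg, hz, rfl⟩
    refine ⟨fun i => sclP c (g i), sclP c z, fun i => ?_, ?_, ?_⟩
    · rw [gammaPP_scale]; exact ⟨g i, hg i, rfl⟩
    · rw [gammaOf_scale]; exact ⟨z, hz, rfl⟩
    · refine Prod.ext ?_ ?_
      · simp [sclP, Prod.fst_sum]
      · funext l
        simp [sclP, sclV, Prod.snd_sum, Finset.sum_apply, Finset.mul_sum, mul_add]

lemma det_colscale {n : ℕ} (A : Matrix (Fin n) (Fin n) ℤ) (D : Fin n → ℤ)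
    (hD : ∀ l, D l ≠ 0) (hA : A.det ≠ 0) :
    (Matrix.of fun i l => A i l * D l).det ≠ 0 := by
  have h : (Matrix.of fun i l => A i l * D l) = A * Matrix.diagonal D := by
    ext i l
    simp [Matrix.mul_diagonal]
  rw [h, Matrix.det_mul, Matrix.det_diagonal]
  exact mul_ne_zero hA (Finset.prod_ne_zero_iff.2 fun l _ => hD l)

lemma condI_scale (hc : c ≠ 0) (h : CondI b d p j) :
    CondI b d p (fun k i => c * j k i) := by
  intro x hx hx0
  rw [calA_scale] at hx
  obtain ⟨y, hy, rfl⟩ := hx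
  have hy0 : y ≠ 0 := by
    intro h0
    exact hx0 (by rw [h0, sclP_zero])
  obtain ⟨h1, h2⟩ := h y hy hy0
  constructor
  · rw [sclP_fst, sclP_snd, dotJ_scale, dotN_scale, ← mul_add]
    exact mul_ne_zero (pow_ne_zero 2 hc) h1
  · rw [sclP_fst, sclP_snd, dotJ_scale, dotN_scale, ← mul_sub]
    exact mul_ne_zero (pow_ne_zero 2 hc) h2

lemma condII_scale (hc : c ≠ 0) (h : CondII b d p j) :
    CondII b d p (fun k i => c * j k i) := by
  intro σ hσinj hσ hex
  have hmem : ∀ i, ∃ y, y ∈ calA b d p j ∧ sclP c y = σ i := by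
    intro i
    have := (hσ i).1
    rw [calA_scale] at this
    obtain ⟨y, hy, hyy⟩ := this
    exact ⟨y, hy, hyy⟩
  choose σ' hσ' heq using hmem
  have hσ'inj : Function.Injective σ' := by
    intro a a' hh
    apply hσinj
    rw [← heq a, ← heq a', hh]
  have hyp : ∀ i, σ' i ∈ calA b d p j ∧ σ' i ≠ 0 ∧
      SumOfPP b d p (d+1) j (σ' i) ∧ (σ' i).2 ≠ 0 := by
    intro i
    refine ⟨hσ' i, ?_, ?_, ?_⟩
    · intro h0
      exact (hσ i).2.1 (by rw [← heq i, h0, sclP_zero])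
    · have := (hσ i).2.2.1
      rw [← heq i] at this
      exact (sumOfPP_scale_iff c hc).1 this
    · intro h0
      apply (hσ i).2.2.2
      rw [← heq i, sclP_snd, h0, sclV_zero]
  have hex' : ∃ i, (σ' i).2 ∉ diffSet j := by
    obtain ⟨i, hi⟩ := hex
    refine ⟨i, fun hmem' => hi ?_⟩
    rw [← heq i, sclP_snd]
    exact (mem_diffSet_scale c hc).2 hmem'
  have hdet := h σ' hσ'inj hyp hex'
  have hmat : (Matrix.of fun i l : Fin (d+1) =>
      if h : (l : ℕ) < d then 2 * (σ i).2 ⟨l, h⟩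
      else Jplus (fun k i => c * j k i) (σ i))
      = Matrix.of fun i l =>
        ((Matrix.of fun i l : Fin (d+1) =>
          if h : (l : ℕ) < d then 2 * (σ' i).2 ⟨l, h⟩ else Jplus j (σ' i)) i l)
        * (if (l : ℕ) < d then c else c ^ 2) := by
    ext i l
    simp only [Matrix.of_apply]
    by_cases hl : (l : ℕ) < d
    · rw [dif_pos hl, dif_pos hl, if_pos hl, ← heq i, sclP_snd]
      show 2 * (c * (σ' i).2 ⟨l, hl⟩) = 2 * (σ' i).2 ⟨l, hl⟩ * c
      ring
    · rw [dif_neg hl, dif_neg hl, if_neg hl, ← heq i, jplus_scale]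
      ring
  rw [hmat]
  exact det_colscale _ _ (fun l => by split_ifs <;> [exact hc; exact pow_ne_zero 2 hc]) hdet

lemma condIIIhalf_scale (hc : c ≠ 0) (tt : Fin 3)
    (avoid avoid' : Set (Fin d → ℤ))
    (havoid : ∀ v, sclV c v ∈ avoid' ↔ v ∈ avoid)
    (h : CondIIIhalf b d p tt j avoid) :
    CondIIIhalf b d p tt (fun k i => c * j k i) avoid' := by
  intro σ hσinj hσ hnotPP i₀ hB hav t g hrep
  have hmem : ∀ i, ∃ y, y ∈ calA b d p j ∧ sclP c y = σ i := by
    intro i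
    have := (hσ i).1
    rw [calA_scale] at this
    obtain ⟨y, hy, hyy⟩ := this
    exact ⟨y, hy, hyy⟩
  choose σ' hσ' heq using hmem
  have hσ'inj : Function.Injective σ' := by
    intro a a' hh
    apply hσinj
    rw [← heq a, ← heq a', hh]
  have hyp : ∀ i, σ' i ∈ calA b d p j ∧ σ' i ≠ 0 ∧ (σ' i).2 ≠ 0 := by
    intro i
    refine ⟨hσ' i, ?_, ?_⟩
    · intro h0
      exact (hσ i).2.1 (by rw [← heq i, h0, sclP_zero])
    · intro h0
      apply (hσ i).2.2
      rw [← heq i, sclP_snd, h0, sclV_zero]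
  have hnotPP' : ¬ ∃ τ : Fin (d+1) → Fin (d+2), Function.Injective τ ∧
      ∀ i, SumOfPP b d p (d+1) j (σ' (τ i)) := by
    rintro ⟨τ, hτ, hsum⟩
    refine hnotPP ⟨τ, hτ, fun i => ?_⟩
    rw [← heq (τ i)]
    exact (sumOfPP_scale_iff c hc).2 (hsum i)
  have hB' : BbbA b d p tt j (σ' i₀) := by
    rw [← heq i₀] at hB
    exact (bbbA_scale_iff c hc tt).1 hB
  have hav' : (σ' i₀).2 ∉ avoid ∨ ∃ i, (σ' i).2 ∉ diffSet j := by
    rcases hav with hav | ⟨i, hi⟩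
    · left
      intro hmem'
      apply hav
      rw [← heq i₀, sclP_snd]
      exact (havoid _).2 hmem'
    · right
      refine ⟨i, fun hmem' => hi ?_⟩
      rw [← heq i, sclP_snd]
      exact (mem_diffSet_scale c hc).2 hmem'
  have hrep' : ∀ i, ∃ g', IsRep b d p j (σ' (i₀.succAbove i)) (t i) g' := by
    intro i
    have hri := hrep i
    rw [← heq (i₀.succAbove i)] at hri
    obtain ⟨y, g', hy, hrep''⟩ := isRep_scale_back c hri
    have : σ' (i₀.succAbove i) = y := sclP_injective c hc hy
    rw [this]
    exact ⟨g', hrep''⟩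
  choose g' hg' using hrep'
  have hdet := h σ' hσ'inj hyp hnotPP' i₀ hB' hav' t g' hg'
  have hmat : (Matrix.of fun i l : Fin (d+1) =>
      if h : (l : ℕ) < d then 2 * (σ (i₀.succAbove i)).2 ⟨l, h⟩
      else if (Finset.univ.filter fun r => t i r = tt).card % 2 = 1
        then Jshift (fun k i => c * j k i) ((σ i₀).2) (σ (i₀.succAbove i))
        else Jplus (fun k i => c * j k i) (σ (i₀.succAbove i)))
      = Matrix.of fun i l =>
        ((Matrix.of fun i l : Fin (d+1) =>
          if h : (l : ℕ) < d then 2 * (σ' (i₀.succAbove i)).2 ⟨l, h⟩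
          else if (Finset.univ.filter fun r => t i r = tt).card % 2 = 1
            then Jshift j ((σ' i₀).2) (σ' (i₀.succAbove i))
            else Jplus j (σ' (i₀.succAbove i))) i l)
        * (if (l : ℕ) < d then c else c ^ 2) := by
    ext i l
    simp only [Matrix.of_apply]
    by_cases hl : (l : ℕ) < d
    · rw [dif_pos hl, dif_pos hl, if_pos hl, ← heq (i₀.succAbove i), sclP_snd]
      show 2 * (c * (σ' (i₀.succAbove i)).2 ⟨l, hl⟩)
        = 2 * (σ' (i₀.succAbove i)).2 ⟨l, hl⟩ * c
      ring
    · rw [dif_neg hl, dif_neg hl, if_neg hl]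
      by_cases hcard : (Finset.univ.filter fun r => t i r = tt).card % 2 = 1
      · rw [if_pos hcard, if_pos hcard, ← heq i₀, ← heq (i₀.succAbove i),
          sclP_snd, jshift_scale]
        ring
      · rw [if_neg hcard, if_neg hcard, ← heq (i₀.succAbove i), jplus_scale]
        ring
  rw [hmat]
  exact det_colscale _ _ (fun l => by split_ifs <;> [exact hc; exact pow_ne_zero 2 hc]) hdet

lemma condIV_scale (hc : c ≠ 0) (h : CondIV b d p j) :
    CondIV b d p (fun k i => c * j k i) := by
  intro m x hx hxne
  rw [gammaPP_scale] at hx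
  obtain ⟨y, hy, rfl⟩ := hx
  have hyne : ∀ k' : Fin b, y ≠ (-(eB b k') + eB b m, j k' - j m) := by
    intro k' h0
    apply hxne k'
    rw [h0]
    refine Prod.ext rfl ?_
    rw [sclP_snd, sclV_sub]
    rfl
  have := h m y hy hyne
  rw [sclP_fst, sclP_snd, dotN_scale]
  have hjm : (fun k i => c * j k i) m = sclV c (j m) := rfl
  rw [hjm, dotJ_scale, dotJ_scale]
  intro h0
  apply this
  have : c ^ 2 * (dotN y.1 (omega0 j) + 2 * dotJ (j m) y.2 + dotJ y.2 y.2) = 0 := by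
    rw [← h0]; ring
  exact (mul_eq_zero.mp this).resolve_left (pow_ne_zero 2 hc)

end ScalingLemmas

/-- scaling invariance of genericity: if the tuple
`(j_1, …, j_b)` of pairwise distinct nonzero vectors of `ℤ^d` satisfies the
genericity conditions (i)–(iv), then so does the scaled tuple
`(K j_1, …, K j_b)` for every positive integer `K`. -/
theorem generic_scaling_invariance
    (b d p : ℕ) (hb : 1 ≤ b) (hd : 1 ≤ d) (hp : 1 ≤ p)
    (j : Fin b → Fin d → ℤ)
    (hne : ∀ k, j k ≠ 0) (hinj : Function.Injective j)
    (hgen : Generic b d p j)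
    (K : ℕ) (hK : 1 ≤ K) :
    (∀ k, (fun i => (K : ℤ) * j k i) ≠ (0 : Fin d → ℤ)) ∧
    Function.Injective (fun k => fun i => (K : ℤ) * j k i) ∧
    Generic b d p (fun k i => (K : ℤ) * j k i) := by
  have hc : (K : ℤ) ≠ 0 := Int.natCast_ne_zero.mpr (by omega)
  refine ⟨?_, ?_, ?_⟩
  · intro k h
    apply hne k
    funext i
    have h1 : (K : ℤ) * j k i = 0 := congrFun h i
    exact (mul_eq_zero.mp h1).resolve_left hc
  · intro k k' h
    apply hinj
    funext i
    exact mul_left_cancel₀ hc (congrFun h i)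
  · obtain ⟨h1, h2, h3, h4⟩ := hgen
    exact ⟨condI_scale _ hc h1, condII_scale _ hc h2,
      ⟨condIIIhalf_scale _ hc 1 _ _ (fun v => mem_sumSet_scale _ hc) h3.1,
       condIIIhalf_scale _ hc 2 _ _ (fun v => mem_negSumSet_scale _ hc) h3.2⟩,
      condIV_scale _ hc h4⟩

end NLSQP
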